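/- Assume R is simply-laced and let 1 ≤ r ≤ n. Then the fundamental weight ω_r is minuscule if and only if w_{0, S∖{α_r}}(α_r) = α_0, where w_{0, S∖{α_r}} is the longest element of the parabolic subgroup W_{S∖{α_r}} of W generated by the simple reflections s_α with α ∈ S∖{α_r}. -/

import Mathlib

noncomputable section

open scoped Classical

local notation "⟪" x ", " y "⟫" => @inner ℝ _ _ x y

namespace PaperFormal

variable (V : Type*) [NormedAddCommGroup V] [InnerProductSpace ℝ V] [FiniteDimensional ℝ V]

/-- The reflection of the Euclidean space `V` in the hyperplane orthogonal to `v`,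
i.e. `β ↦ β - (2⟪β,v⟫/⟪v,v⟫) v`. -/
def sref (v : V) : V ≃ₗᵢ[ℝ] V := Submodule.reflection (ℝ ∙ v)ᗮ

/-- A reduced irreducible crystallographic root system `R` in the Euclidean space `V`,
together with a fixed base of simple roots `a 1, …, a n`. -/
structure RootSystemWithBase (n : ℕ) : Type _ where
  /-- the set of roots -/
  R : Set V
  /-- the simple roots `a 1, …, a n` (values outside `{1, …, n}` are irrelevant) -/
  a : ℕ → V
  finite : R.Finite
  ne_zero : ∀ β ∈ R, β ≠ 0
  refl_mem : ∀ α ∈ R, ∀ β ∈ R, sref V α β ∈ R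
  crystallographic : ∀ α ∈ R, ∀ β ∈ R, ∃ k : ℤ, 2 * ⟪β, α⟫ / ⟪α, α⟫ = (k : ℝ)
  reduced : ∀ α ∈ R, ∀ t : ℝ, t • α ∈ R → t = 1 ∨ t = -1
  irreducible : ∀ P : Set V, (∀ x ∈ R, ∀ y ∈ R, x ∈ P → ⟪x, y⟫ ≠ 0 → y ∈ P) →
      (R ∩ P).Nonempty → R ⊆ P
  simple_mem : ∀ i ∈ Finset.Icc 1 n, a i ∈ R
  indep : LinearIndependent ℝ (fun i : (Set.Icc 1 n : Set ℕ) => a i)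
  span_top : Submodule.span ℝ (a '' Set.Icc 1 n) = ⊤
  root_combo : ∀ β ∈ R, ∃ c : ℕ → ℤ, ((∀ i, 0 ≤ c i) ∨ (∀ i, c i ≤ 0)) ∧
      β = ∑ i ∈ Finset.Icc 1 n, (c i : ℝ) • a i

namespace RootSystemWithBase

variable {V} {n : ℕ} (S : RootSystemWithBase V n)

/-- The simple reflection `s i` associated to the simple root `a i`. -/
def s (i : ℕ) : V ≃ₗᵢ[ℝ] V := sref V (S.a i)

/-- The product of the simple reflections along a list of indices
(leftmost factor acting last). -/
def prodW (l : List ℕ) : V ≃ₗᵢ[ℝ] V := (l.map S.s).prod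

/-- The parabolic subgroup `W_J` of the Weyl group generated by the simple reflections
`s i` for `i ∈ J`. -/
def WJ (J : Set ℕ) : Subgroup (V ≃ₗᵢ[ℝ] V) :=
  Subgroup.closure (S.s '' (J ∩ Set.Icc 1 n))

/-- The Weyl group `W`, generated by all simple reflections. -/
def W : Subgroup (V ≃ₗᵢ[ℝ] V) := S.WJ Set.univ

/-- The length of `w` with respect to the simple reflections indexed by `J`:
the least length of a word in these reflections expressing `w`. -/
def lenJ (J : Set ℕ) (w : V ≃ₗᵢ[ℝ] V) : ℕ :=
  sInf {k | ∃ l : List ℕ, (∀ i ∈ l, i ∈ J ∩ Set.Icc 1 n) ∧ l.length = k ∧ w = S.prodW l}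

/-- The length function `ℓ` of the Weyl group. -/
def len (w : V ≃ₗᵢ[ℝ] V) : ℕ := S.lenJ Set.univ w

/-- `w` is the longest element `w_{0,J}` of the parabolic subgroup `W_J`. -/
def IsLongest (J : Set ℕ) (w : V ≃ₗᵢ[ℝ] V) : Prop :=
  w ∈ S.WJ J ∧ ∀ x ∈ S.WJ J, S.lenJ J x ≤ S.lenJ J w

/-- `β` is a positive root (with respect to the base `a`). -/
def IsPos (β : V) : Prop :=
  β ∈ S.R ∧ ∃ c : ℕ → ℝ, (∀ i, 0 ≤ c i) ∧ β = ∑ i ∈ Finset.Icc 1 n, c i • S.a i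

/-- `β` is a negative root. -/
def IsNeg (β : V) : Prop := S.IsPos (-β)

/-- `h` is the highest root `α_0`: a root such that `h - β` is a nonnegative combination of
the simple roots for every root `β`. -/
def IsHighest (h : V) : Prop :=
  h ∈ S.R ∧ ∀ β ∈ S.R, ∃ c : ℕ → ℝ, (∀ i, 0 ≤ c i) ∧
    h - β = ∑ i ∈ Finset.Icc 1 n, c i • S.a i

/-- The root system is simply laced: all roots have the same length. -/
def SimplyLaced : Prop := ∀ α ∈ S.R, ∀ β ∈ S.R, ⟪α, α⟫ = ⟪β, β⟫

/-- `ω` is the fundamental weight `ω_r` dual to the simple root `a r`: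
`⟨ω, a j⟩ = δ_{rj}` for `1 ≤ j ≤ n`. -/
def IsFundamental (r : ℕ) (ω : V) : Prop :=
  ∀ j ∈ Finset.Icc 1 n, 2 * ⟪ω, S.a j⟫ / ⟪S.a j, S.a j⟫ = if j = r then 1 else 0

/-- A weight `ω` is minuscule: `⟨ω, β⟩ ≤ 1` for every positive root `β`. -/
def Minuscule (ω : V) : Prop := ∀ β, S.IsPos β → 2 * ⟪ω, β⟫ / ⟪β, β⟫ ≤ 1

end RootSystemWithBase

variable {V}

/-!
Pairing with `ω_r` reads off the `α_r`-coefficient of a root, and in the simply-laced case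
`⟨ω_r, β⟩ = 2 (ω_r, β) / (α_r, α_r)` for every root `β`; hence `ω_r` is minuscule iff
`(ω_r, α_0) ≤ (ω_r, α_r)`. Put `J = S ∖ {α_r}` and `w = w_{0,J}`. Then `w` fixes `ω_r` and,
being longest in `W_J`, sends every simple root of `J` to a negative root. If `ω_r` is minuscule,
`α_0 - w α_r` is a nonnegative combination of the simple roots of `J` only, so
`w⁻¹ α_0 = α_r - (nonnegative combination)`; as `(ω_r, w⁻¹ α_0) > 0` this root is positive, which
forces `w⁻¹ α_0 = α_r`. Conversely, if `w α_r = α_0` then `(ω_r, α_0) = (ω_r, α_r)`.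
-/

section

omit [FiniteDimensional ℝ V]

lemma sref_apply (v x : V) : sref V v x = x - (2 * ⟪x, v⟫ / ⟪v, v⟫) • v := by
  rw [sref, Submodule.reflection_orthogonal_apply, Submodule.reflection_singleton_apply,
    real_inner_self_eq_norm_sq, real_inner_comm, RCLike.ofReal_real_eq_id, id]
  module

lemma sref_apply_self (v : V) : sref V v v = -v :=
  Submodule.reflection_orthogonalComplement_singleton_eq_neg v

lemma sref_conj (u : V ≃ₗᵢ[ℝ] V) (v : V) : u * sref V v * u⁻¹ = sref V (u v) := by
  ext x
  have hx : u (u⁻¹ x) = x := u.apply_symm_apply x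
  have h1 : ⟪u⁻¹ x, v⟫ = ⟪x, u v⟫ := by rw [← u.inner_map_map, hx]
  have h2 : ⟪v, v⟫ = ⟪u v, u v⟫ := (u.inner_map_map v v).symm
  change u (sref V v (u⁻¹ x)) = _
  rw [sref_apply, sref_apply, map_sub, map_smul, hx, h1, h2]

namespace RootSystemWithBase

variable {n : ℕ} (S : RootSystemWithBase V n)

lemma s_apply (i : ℕ) (x : V) :
    S.s i x = x - (2 * ⟪x, S.a i⟫ / ⟪S.a i, S.a i⟫) • S.a i :=
  sref_apply _ _

lemma s_mul_self (i : ℕ) : S.s i * S.s i = 1 :=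
  Submodule.reflection_mul_reflection _

lemma s_inv (i : ℕ) : (S.s i)⁻¹ = S.s i :=
  Submodule.reflection_inv

lemma neg_mem_R {β : V} (hβ : β ∈ S.R) : -β ∈ S.R :=
  sref_apply_self β ▸ S.refl_mem β hβ β hβ

def posCone : PointedCone ℝ V where
  carrier := {v | ∃ c : ℕ → ℝ, (∀ i, 0 ≤ c i) ∧ v = ∑ i ∈ Finset.Icc 1 n, c i • S.a i}
  add_mem' := by
    rintro _ _ ⟨c, hc, rfl⟩ ⟨d, hd, rfl⟩
    exact ⟨c + d, fun i => add_nonneg (hc i) (hd i), by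
      simp only [Pi.add_apply, add_smul, Finset.sum_add_distrib]⟩
  zero_mem' := ⟨0, fun _ => le_rfl, by simp⟩
  smul_mem' := by
    rintro t _ ⟨c, hc, rfl⟩
    exact ⟨fun i => t * c i, fun i => mul_nonneg t.2 (hc i), by
      simp only [Finset.smul_sum, mul_smul]; rfl⟩

lemma simple_mem_posCone {i : ℕ} (hi : i ∈ Finset.Icc 1 n) : S.a i ∈ S.posCone :=
  ⟨fun k => if k = i then 1 else 0, fun k => by positivity, by simp [hi]⟩

lemma inner_self_simple_pos {i : ℕ} (hi : i ∈ Finset.Icc 1 n) : 0 < ⟪S.a i, S.a i⟫ :=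
  real_inner_self_pos.mpr (S.ne_zero _ (S.simple_mem i hi))

lemma isPos_simple {i : ℕ} (hi : i ∈ Finset.Icc 1 n) : S.IsPos (S.a i) :=
  ⟨S.simple_mem i hi, S.simple_mem_posCone hi⟩

lemma coeff_eq_zero_of_sum_smul_eq_zero {c : ℕ → ℝ}
    (h : ∑ i ∈ Finset.Icc 1 n, c i • S.a i = 0) : ∀ i ∈ Finset.Icc 1 n, c i = 0 := by
  have hsum : ∑ i : Set.Icc 1 n, c i • S.a i = 0 :=
    (Finset.sum_subtype (Finset.Icc 1 n) (p := (· ∈ Set.Icc 1 n)) (by simp) _).symm.trans h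
  intro i hi
  exact Fintype.linearIndependent_iff.mp S.indep _ hsum ⟨i, by simpa using hi⟩

lemma eq_zero_of_mem_posCone_of_neg_mem {v : V} (hv : v ∈ S.posCone) (hv' : -v ∈ S.posCone) :
    v = 0 := by
  obtain ⟨c, hc, rfl⟩ := hv
  obtain ⟨d, hd, hdeq⟩ := hv'
  have hcd := S.coeff_eq_zero_of_sum_smul_eq_zero (c := c + d) (by
    simp only [Pi.add_apply, add_smul, Finset.sum_add_distrib, ← hdeq, add_neg_cancel])
  refine Finset.sum_eq_zero fun i hi => ?_
  have : c i + d i = 0 := hcd i hi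
  rw [show c i = 0 by linarith [hc i, hd i], zero_smul]

variable {S} in
lemma IsPos.not_isNeg {β : V} (hβ : S.IsPos β) : ¬ S.IsNeg β := fun hneg =>
  S.ne_zero β hβ.1 (S.eq_zero_of_mem_posCone_of_neg_mem hβ.2 hneg.2)

lemma isPos_or_isNeg {β : V} (hβ : β ∈ S.R) : S.IsPos β ∨ S.IsNeg β := by
  obtain ⟨c, hc | hc, rfl⟩ := S.root_combo β hβ
  · exact .inl ⟨hβ, fun i => c i, fun i => Int.cast_nonneg_iff.mpr (hc i), rfl⟩
  · refine .inr ⟨S.neg_mem_R hβ, fun i => -c i, fun i => by simpa using hc i, ?_⟩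
    simp [Finset.sum_neg_distrib]

lemma eq_simple_of_smul_sub_mem_posCone {i : ℕ} (hi : i ∈ Finset.Icc 1 n) {β : V}
    (hβ : S.IsPos β) {t : ℝ} (h : t • S.a i - β ∈ S.posCone) : β = S.a i := by
  obtain ⟨hβR, c, hc, rfl⟩ := hβ
  obtain ⟨d, hd, hdeq⟩ := h
  have hcd := S.coeff_eq_zero_of_sum_smul_eq_zero
    (c := fun k => c k + d k - if k = i then t else 0) (by
      simp only [sub_smul, add_smul, ite_smul, zero_smul, Finset.sum_sub_distrib,
        Finset.sum_add_distrib, Finset.sum_ite_eq', if_pos hi, ← hdeq]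
      abel)
  have hβi : ∑ k ∈ Finset.Icc 1 n, c k • S.a k = c i • S.a i := by
    refine Finset.sum_eq_single_of_mem i hi fun k hk hki => ?_
    have : c k + d k = 0 := by simpa [hki] using hcd k hk
    rw [show c k = 0 by linarith [hc k, hd k], zero_smul]
  rw [hβi] at hβR ⊢
  rcases S.reduced _ (S.simple_mem i hi) _ hβR with h1 | h1
  · rw [h1, one_smul]
  · linarith [hc i]

lemma isPos_s_apply {i : ℕ} (hi : i ∈ Finset.Icc 1 n) {β : V} (hβ : S.IsPos β)
    (hne : β ≠ S.a i) : S.IsPos (S.s i β) := by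
  refine (S.isPos_or_isNeg (S.refl_mem _ (S.simple_mem i hi) β hβ.1)).resolve_right
    fun hneg => hne (S.eq_simple_of_smul_sub_mem_posCone hi hβ
      (t := 2 * ⟪β, S.a i⟫ / ⟪S.a i, S.a i⟫) ?_)
  have h : -S.s i β ∈ S.posCone := hneg.2
  rwa [s_apply, neg_sub] at h

lemma prodW_singleton (i : ℕ) : S.prodW [i] = S.s i := by
  simp [prodW]

lemma prodW_cons (i : ℕ) (l : List ℕ) : S.prodW (i :: l) = S.s i * S.prodW l := by
  simp [prodW]

lemma prodW_append (l₁ l₂ : List ℕ) : S.prodW (l₁ ++ l₂) = S.prodW l₁ * S.prodW l₂ := by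
  simp [prodW]

lemma prodW_reverse (l : List ℕ) : S.prodW l.reverse = (S.prodW l)⁻¹ := by
  induction l with
  | nil => rfl
  | cons i l ih =>
    rw [List.reverse_cons, prodW_append, ih, prodW_singleton, prodW_cons, mul_inv_rev, s_inv]

lemma s_mem_WJ {J : Set ℕ} {i : ℕ} (hi : i ∈ J ∩ Set.Icc 1 n) : S.s i ∈ S.WJ J :=
  Subgroup.subset_closure ⟨i, hi, rfl⟩

lemma exists_word_of_mem_WJ {J : Set ℕ} {g : V ≃ₗᵢ[ℝ] V} (hg : g ∈ S.WJ J) :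
    ∃ l : List ℕ, (∀ i ∈ l, i ∈ J ∩ Set.Icc 1 n) ∧ g = S.prodW l := by
  induction hg using Subgroup.closure_induction'' with
  | mem _ hx =>
    obtain ⟨i, hi, rfl⟩ := hx
    exact ⟨[i], by simpa using hi, (S.prodW_singleton i).symm⟩
  | inv_mem _ hx =>
    obtain ⟨i, hi, rfl⟩ := hx
    exact ⟨[i], by simpa using hi, by rw [s_inv, prodW_singleton]⟩
  | one => exact ⟨[], by simp, rfl⟩
  | mul _ _ _ _ ihx ihy =>
    obtain ⟨l₁, h₁, rfl⟩ := ihx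
    obtain ⟨l₂, h₂, rfl⟩ := ihy
    exact ⟨l₁ ++ l₂, fun i hi => (List.mem_append.mp hi).elim (h₁ i) (h₂ i),
      (S.prodW_append l₁ l₂).symm⟩

lemma lenJ_le {J : Set ℕ} {l : List ℕ} (hl : ∀ i ∈ l, i ∈ J ∩ Set.Icc 1 n) :
    S.lenJ J (S.prodW l) ≤ l.length := by
  rw [lenJ]
  exact Nat.sInf_le ⟨l, hl, rfl, rfl⟩

lemma exists_word_length_eq_lenJ {J : Set ℕ} {g : V ≃ₗᵢ[ℝ] V} (hg : g ∈ S.WJ J) :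
    ∃ l : List ℕ, (∀ i ∈ l, i ∈ J ∩ Set.Icc 1 n) ∧ l.length = S.lenJ J g ∧ g = S.prodW l := by
  obtain ⟨l, hl, rfl⟩ := S.exists_word_of_mem_WJ hg
  rw [lenJ]
  exact Nat.sInf_mem (s := {k | ∃ l' : List ℕ, (∀ i ∈ l', i ∈ J ∩ Set.Icc 1 n) ∧
    l'.length = k ∧ S.prodW l = S.prodW l'}) ⟨l.length, l, hl, rfl, rfl⟩

lemma lenJ_inv_le {J : Set ℕ} {g : V ≃ₗᵢ[ℝ] V} (hg : g ∈ S.WJ J) :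
    S.lenJ J g⁻¹ ≤ S.lenJ J g := by
  obtain ⟨l, hl, hlen, rfl⟩ := S.exists_word_length_eq_lenJ hg
  rw [← hlen, ← S.prodW_reverse, ← l.length_reverse]
  exact S.lenJ_le fun i hi => hl i (List.mem_reverse.mp hi)

lemma prodW_apply_mem_R {l : List ℕ} (hl : ∀ i ∈ l, i ∈ Set.Icc 1 n) {β : V}
    (hβ : β ∈ S.R) : S.prodW l β ∈ S.R := by
  induction l with
  | nil => exact hβ
  | cons i l ih =>
    rw [prodW_cons]
    exact S.refl_mem _ (S.simple_mem i (Finset.mem_Icc.mpr (hl i (by simp)))) _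
      (ih fun k hk => hl k (by simp [hk]))

lemma apply_mem_R_of_mem_WJ {J : Set ℕ} {g : V ≃ₗᵢ[ℝ] V} (hg : g ∈ S.WJ J) {β : V}
    (hβ : β ∈ S.R) : g β ∈ S.R := by
  obtain ⟨l, hl, rfl⟩ := S.exists_word_of_mem_WJ hg
  exact S.prodW_apply_mem_R (fun i hi => (hl i hi).2) hβ

lemma apply_eq_self_of_mem_WJ {J : Set ℕ} {x : V} (hx : ∀ i ∈ J ∩ Set.Icc 1 n, ⟪x, S.a i⟫ = 0)
    {g : V ≃ₗᵢ[ℝ] V} (hg : g ∈ S.WJ J) : g x = x := by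
  obtain ⟨l, hl, rfl⟩ := S.exists_word_of_mem_WJ hg
  clear hg
  induction l with
  | nil => rfl
  | cons i l ih =>
    rw [prodW_cons, LinearIsometryEquiv.coe_mul, Function.comp_apply,
      ih fun k hk => hl k (by simp [hk]), s_apply, hx i (hl i (by simp))]
    simp

/-- The exchange condition: at the letter `s i` where `a j` turns negative we have
`prodW l (a j) = a i`, so conjugation turns `s j` into `s i`, which cancels that letter. -/
lemma exists_sublist_of_isNeg {l : List ℕ} (hl : ∀ i ∈ l, i ∈ Set.Icc 1 n) {j : ℕ}
    (hj : j ∈ Set.Icc 1 n) (hneg : S.IsNeg (S.prodW l (S.a j))) :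
    ∃ l', l'.Sublist l ∧ l'.length + 1 = l.length ∧ S.prodW l * S.s j = S.prodW l' := by
  induction l with
  | nil => exact absurd hneg (S.isPos_simple (Finset.mem_Icc.mpr hj)).not_isNeg
  | cons i l ih =>
    have hl' : ∀ k ∈ l, k ∈ Set.Icc 1 n := fun k hk => hl k (by simp [hk])
    have hi : i ∈ Finset.Icc 1 n := Finset.mem_Icc.mpr (hl i (by simp))
    have hR : S.prodW l (S.a j) ∈ S.R :=
      S.prodW_apply_mem_R hl' (S.simple_mem j (Finset.mem_Icc.mpr hj))
    rcases S.isPos_or_isNeg hR with hpos | hneg'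
    · have heq : S.prodW l (S.a j) = S.a i := by
        by_contra hne
        exact (S.isPos_s_apply hi hpos hne).not_isNeg (by simpa [prodW_cons] using hneg)
      have hcomm : S.prodW l * S.s j = S.s i * S.prodW l := by
        rw [← mul_inv_eq_iff_eq_mul, s, sref_conj, heq]; rfl
      refine ⟨l, List.sublist_cons_self i l, rfl, ?_⟩
      rw [prodW_cons, mul_assoc, hcomm, ← mul_assoc, s_mul_self, one_mul]
    · obtain ⟨l', hsub, hlen, hkey⟩ := ih hl' hneg'
      refine ⟨i :: l', hsub.cons_cons i, by simp [hlen], ?_⟩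
      rw [prodW_cons, prodW_cons, mul_assoc, hkey]

variable {S}

lemma IsLongest.inv {J : Set ℕ} {w : V ≃ₗᵢ[ℝ] V} (hw : S.IsLongest J w) :
    S.IsLongest J w⁻¹ :=
  ⟨inv_mem hw.1, fun x hx => (hw.2 x hx).trans (by
    simpa using S.lenJ_inv_le (inv_mem hw.1))⟩

lemma IsLongest.isNeg_apply_simple {J : Set ℕ} {w : V ≃ₗᵢ[ℝ] V} (hw : S.IsLongest J w) {j : ℕ}
    (hj : j ∈ J ∩ Set.Icc 1 n) : S.IsNeg (w (S.a j)) := by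
  have haj : S.a j ∈ S.R := S.simple_mem j (Finset.mem_Icc.mpr hj.2)
  refine (S.isPos_or_isNeg (S.apply_mem_R_of_mem_WJ hw.1 haj)).resolve_left fun hpos => ?_
  have hws : w * S.s j ∈ S.WJ J := mul_mem hw.1 (S.s_mem_WJ hj)
  obtain ⟨l, hl, hlen, hwl⟩ := S.exists_word_length_eq_lenJ hws
  have hneg : S.IsNeg (S.prodW l (S.a j)) := by
    rw [← hwl, LinearIsometryEquiv.coe_mul, Function.comp_apply, s, sref_apply_self, map_neg]
    simpa [IsNeg] using hpos
  obtain ⟨l', hsub, hlen', hl'⟩ := S.exists_sublist_of_isNeg (fun i hi => (hl i hi).2) hj.2 hneg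
  have hw' : w = S.prodW l' := by rw [← hl', ← hwl, mul_assoc, s_mul_self, mul_one]
  have h₁ : S.lenJ J w ≤ l'.length := hw' ▸ S.lenJ_le fun i hi => hl i (hsub.subset hi)
  have h₂ : S.lenJ J (w * S.s j) ≤ S.lenJ J w := hw.2 _ hws
  omega

lemma IsLongest.neg_apply_mem_posCone {J : Set ℕ} {w : V ≃ₗᵢ[ℝ] V} (hw : S.IsLongest J w)
    {c : ℕ → ℝ} (hc : ∀ i, 0 ≤ c i) (hcJ : ∀ i ∈ Finset.Icc 1 n, i ∉ J → c i = 0) :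
    -w (∑ i ∈ Finset.Icc 1 n, c i • S.a i) ∈ S.posCone := by
  rw [map_sum, ← Finset.sum_neg_distrib]
  refine Submodule.sum_mem _ fun i hi => ?_
  by_cases hiJ : i ∈ J
  · rw [map_smul, ← smul_neg]
    exact S.posCone.smul_mem (hc i) (hw.isNeg_apply_simple ⟨hiJ, Finset.mem_Icc.mp hi⟩).2
  · rw [hcJ i hi hiJ, zero_smul, map_zero, neg_zero]
    exact zero_mem _

lemma IsFundamental.inner_simple {r : ℕ} {ω : V} (hω : S.IsFundamental r ω) {i : ℕ}
    (hi : i ∈ Finset.Icc 1 n) : ⟪ω, S.a i⟫ = if i = r then ⟪S.a r, S.a r⟫ / 2 else 0 := by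
  have h := hω i hi
  have hne : ⟪S.a i, S.a i⟫ ≠ 0 := inner_self_ne_zero.mpr (S.ne_zero _ (S.simple_mem i hi))
  split_ifs at h ⊢ with hir
  · subst hir
    field_simp at h
    linarith
  · field_simp at h
    linarith

lemma IsFundamental.inner_simple_self {r : ℕ} {ω : V} (hω : S.IsFundamental r ω)
    (hr : r ∈ Finset.Icc 1 n) : ⟪ω, S.a r⟫ = ⟪S.a r, S.a r⟫ / 2 := by
  simpa using hω.inner_simple hr

lemma IsFundamental.inner_sum_smul {r : ℕ} {ω : V} (hω : S.IsFundamental r ω)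
    (hr : r ∈ Finset.Icc 1 n) (c : ℕ → ℝ) :
    ⟪ω, ∑ i ∈ Finset.Icc 1 n, c i • S.a i⟫ = c r * (⟪S.a r, S.a r⟫ / 2) := by
  simp only [inner_sum, real_inner_smul_right]
  rw [Finset.sum_congr rfl fun i hi => by rw [hω.inner_simple hi]]
  simp [hr]

lemma IsFundamental.inner_nonneg {r : ℕ} {ω : V} (hω : S.IsFundamental r ω)
    (hr : r ∈ Finset.Icc 1 n) {v : V} (hv : v ∈ S.posCone) : 0 ≤ ⟪ω, v⟫ := by
  obtain ⟨c, hc, rfl⟩ := hv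
  rw [hω.inner_sum_smul hr]
  exact mul_nonneg (hc r) (div_nonneg real_inner_self_nonneg zero_le_two)

lemma IsFundamental.isPos_of_inner_pos {r : ℕ} {ω : V} (hω : S.IsFundamental r ω)
    (hr : r ∈ Finset.Icc 1 n) {β : V} (hβ : β ∈ S.R) (hpos : 0 < ⟪ω, β⟫) : S.IsPos β :=
  (S.isPos_or_isNeg hβ).resolve_right fun hneg => by
    have := hω.inner_nonneg hr hneg.2
    rw [inner_neg_right] at this
    linarith

lemma IsFundamental.inner_apply_of_mem_WJ {r : ℕ} {ω : V} (hω : S.IsFundamental r ω)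
    {g : V ≃ₗᵢ[ℝ] V} (hg : g ∈ S.WJ (Set.Icc 1 n \ {r})) (x : V) : ⟪ω, g x⟫ = ⟪ω, x⟫ := by
  have hfix : g ω = ω := S.apply_eq_self_of_mem_WJ (fun i hi => by
    rw [hω.inner_simple (Finset.mem_Icc.mpr hi.2), if_neg (show i ≠ r from hi.1.2)]) hg
  calc ⟪ω, g x⟫ = ⟪g ω, g x⟫ := by rw [hfix]
    _ = ⟪ω, x⟫ := g.inner_map_map ω x

lemma IsHighest.isPos {α0 : V} (hα0 : S.IsHighest α0) {r : ℕ} (hr : r ∈ Finset.Icc 1 n) :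
    S.IsPos α0 := by
  have h := add_mem (hα0.2 _ (S.simple_mem r hr)) (S.simple_mem_posCone hr)
  rw [sub_add_cancel] at h
  exact ⟨hα0.1, h⟩

lemma IsHighest.inner_le {α0 : V} (hα0 : S.IsHighest α0) {r : ℕ} {ω : V}
    (hω : S.IsFundamental r ω) (hr : r ∈ Finset.Icc 1 n) {β : V} (hβ : β ∈ S.R) :
    ⟪ω, β⟫ ≤ ⟪ω, α0⟫ := by
  have := hω.inner_nonneg hr (hα0.2 β hβ)
  rw [inner_sub_right] at this
  linarith

lemma minuscule_iff_inner_highest_le (hsl : S.SimplyLaced) {r : ℕ} (hr : r ∈ Finset.Icc 1 n)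
    {α0 : V} (hα0 : S.IsHighest α0) {ω : V} (hω : S.IsFundamental r ω) :
    S.Minuscule ω ↔ ⟪ω, α0⟫ ≤ ⟪ω, S.a r⟫ := by
  have key : ∀ β ∈ S.R, 2 * ⟪ω, β⟫ / ⟪β, β⟫ ≤ 1 ↔ ⟪ω, β⟫ ≤ ⟪ω, S.a r⟫ := fun β hβ => by
    rw [hsl β hβ _ (S.simple_mem r hr), div_le_one (S.inner_self_simple_pos hr),
      hω.inner_simple_self hr]
    constructor <;> intro <;> linarith
  exact ⟨fun h => (key α0 hα0.1).mp (h α0 (hα0.isPos hr)),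
    fun h β hβ => (key β hβ.1).mpr ((hα0.inner_le hω hr hβ.1).trans h)⟩

lemma IsLongest.apply_simple_eq_highest {r : ℕ} (hr : r ∈ Finset.Icc 1 n) {α0 : V}
    (hα0 : S.IsHighest α0) {ω : V} (hω : S.IsFundamental r ω) {w : V ≃ₗᵢ[ℝ] V}
    (hw : S.IsLongest (Set.Icc 1 n \ {r}) w) (h : ⟪ω, α0⟫ ≤ ⟪ω, S.a r⟫) :
    w (S.a r) = α0 := by
  have hwar : w (S.a r) ∈ S.R := S.apply_mem_R_of_mem_WJ hw.1 (S.simple_mem r hr)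
  have hα0r : ⟪ω, α0⟫ = ⟪ω, S.a r⟫ := le_antisymm h <| by
    simpa only [hω.inner_apply_of_mem_WJ hw.1] using hα0.inner_le hω hr hwar
  obtain ⟨d, hd, hdeq⟩ := hα0.2 _ hwar
  have hdr : d r = 0 := by
    have := hω.inner_sum_smul hr d
    rw [← hdeq, inner_sub_right, hα0r, hω.inner_apply_of_mem_WJ hw.1, sub_self] at this
    exact (mul_eq_zero.mp this.symm).resolve_right (half_pos (S.inner_self_simple_pos hr)).ne'
  have hbelow : (1 : ℝ) • S.a r - w⁻¹ α0 ∈ S.posCone := by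
    have := hw.inv.neg_apply_mem_posCone hd fun i hi hiJ => by
      rwa [show i = r by simpa [Finset.mem_Icc.mp hi] using hiJ]
    rwa [← hdeq, map_sub, neg_sub, show w⁻¹ (w (S.a r)) = S.a r from w.symm_apply_apply _,
      ← one_smul ℝ (S.a r)] at this
  have hpos : S.IsPos (w⁻¹ α0) := hω.isPos_of_inner_pos hr
    (S.apply_mem_R_of_mem_WJ (inv_mem hw.1) hα0.1) (by
      rw [hω.inner_apply_of_mem_WJ (inv_mem hw.1), hα0r, hω.inner_simple_self hr]
      exact half_pos (S.inner_self_simple_pos hr))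
  rw [← S.eq_simple_of_smul_sub_mem_posCone hr hpos hbelow]
  exact w.apply_symm_apply α0

end RootSystemWithBase

end

/-- Assume `R` is simply laced and `1 ≤ r ≤ n`.  Then the fundamental weight
`ω_r` is minuscule if and only if `w_{0, S∖{α_r}}(α_r) = α_0`, where `w_{0, S∖{α_r}}` is the
longest element of the parabolic subgroup `W_{S∖{α_r}}`. -/
theorem statement3 {n : ℕ} (S : RootSystemWithBase V n) (hsl : S.SimplyLaced)
    (r : ℕ) (hr : r ∈ Finset.Icc 1 n) (α0 : V) (hα0 : S.IsHighest α0)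
    (ω : V) (hω : S.IsFundamental r ω)
    (w0J : V ≃ₗᵢ[ℝ] V) (hw0J : S.IsLongest (Set.Icc 1 n \ {r}) w0J) :
    S.Minuscule ω ↔ w0J (S.a r) = α0 := by
  rw [S.minuscule_iff_inner_highest_le hsl hr hα0 hω]
  refine ⟨hw0J.apply_simple_eq_highest hr hα0 hω, fun h => ?_⟩
  rw [← h, hω.inner_apply_of_mem_WJ hw0J.1]

end PaperFormal
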